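/- Assume r_0 >= 1 and that v lies in S. Let c >= 1 be an integer with -v(a_i) <= c for every i with a_i != 0, and let m >= 0 be the least integer with q^(r_0 * m) >= c. Let x be a nonzero element of L with v(x) < N_v. Then either there exists n with 0 <= n <= m-1 such that phi^n(x) != 0 and Exc(phi^n(x)) holds, or v(phi^m(x)) <= 0. (The descent dichotomy underlying Lemma 2.14 of the paper: after at most m iterations, where q^(r_0 m) is comparable to c, either an iterate is exceptional or the orbit reaches non-positive valuation.) -/

import Mathlib

open Filter Topology Finset

universe u

section Drinfeld

variable {L : Type u} [Field L] {k : Type*} [Field k]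

/-- The integer value of the valuation `v` at `y` (junk value `0` at `y = 0`). -/
noncomputable def vz (v : L → WithTop ℤ) (y : L) : ℤ := WithTop.untopD 0 (v y)

/-- `v : L → ℤ ∪ {∞}` is a normalized discrete valuation: `v 0 = ∞`, `v` is finite and
surjective onto `ℤ` on nonzero elements, `v (x * y) = v x + v y` and
`v (x + y) ≥ min (v x) (v y)`. -/
structure IsDVal (v : L → WithTop ℤ) : Prop where
  map_zero : v 0 = ⊤
  ne_top : ∀ x : L, x ≠ 0 → v x ≠ ⊤
  map_mul : ∀ x y : L, v (x * y) = v x + v y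
  add_min : ∀ x y : L, min (v x) (v y) ≤ v (x + y)
  surj : ∀ n : ℤ, ∃ x : L, v x = (n : WithTop ℤ)

/-- `res : L → k` restricted to the valuation ring of `v` is the quotient map onto the
residue field `k` of `v`. -/
structure IsResidue (v : L → WithTop ℤ) (res : L → k) : Prop where
  map_one : res 1 = 1
  map_add : ∀ x y : L, 0 ≤ v x → 0 ≤ v y → res (x + y) = res x + res y
  map_mul : ∀ x y : L, 0 ≤ v x → 0 ≤ v y → res (x * y) = res x * res y
  eq_zero_iff : ∀ x : L, 0 ≤ v x → (res x = 0 ↔ 0 < v x)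
  surj : ∀ c : k, ∃ x : L, 0 ≤ v x ∧ res x = c

/-- The angular component of `y` at `v`, with respect to the uniformizer `π` and the
residue map `res`: the residue of `y * π ^ (-v y)`. -/
noncomputable def ac (v : L → WithTop ℤ) (π : L) (res : L → k) (y : L) : k :=
  res (y * π ^ (-(vz v y)))

/-- The `F_q`-linear map `φ(x) = ∑_{i=r₀}^{r} a i * x^(q^i)`. -/
noncomputable def phiMap (q r₀ r : ℕ) (a : ℕ → L) (x : L) : L :=
  ∑ i ∈ Finset.Icc r₀ r, a i * x ^ q ^ i

/-- The set `P_v ⊆ ℚ` of possible exceptional valuations: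
`(v(a i) - v(a j))/(q^j - q^i)` for `r₀ ≤ i < j ≤ r` with `a i ≠ 0 ≠ a j`, together with `0`. -/
def Pset (q : ℕ) (v : L → WithTop ℤ) (r₀ r : ℕ) (a : ℕ → L) : Set ℚ :=
  {0} ∪ {α : ℚ | ∃ i j : ℕ, r₀ ≤ i ∧ i < j ∧ j ≤ r ∧ a i ≠ 0 ∧ a j ≠ 0 ∧
      α = ((vz v (a i) : ℚ) - (vz v (a j) : ℚ)) / ((q : ℚ) ^ j - (q : ℚ) ^ i)}

/-- The set `J(α)` of indices where `v(a i) + q^i * α` attains its minimum. -/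
def Jset (q : ℕ) (v : L → WithTop ℤ) (r₀ r : ℕ) (a : ℕ → L) (α : ℚ) : Set ℕ :=
  {i : ℕ | r₀ ≤ i ∧ i ≤ r ∧ a i ≠ 0 ∧
    ∀ j : ℕ, r₀ ≤ j → j ≤ r → a j ≠ 0 →
      (vz v (a i) : ℚ) + (q : ℚ) ^ i * α ≤ (vz v (a j) : ℚ) + (q : ℚ) ^ j * α}

open scoped Classical in
/-- The set `R_v(α) ⊆ k_v`: `1` together with the nonzero roots of
`∑_{i ∈ J(α)} ac(a i) * X^(q^i)`. -/
noncomputable def Rset (q : ℕ) (v : L → WithTop ℤ) (π : L) (res : L → k)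
    (r₀ r : ℕ) (a : ℕ → L) (α : ℚ) : Set k :=
  {1} ∪ {γ : k | γ ≠ 0 ∧
    ∑ i ∈ Finset.Icc r₀ r,
      (if i ∈ Jset q v r₀ r a α then ac v π res (a i) * γ ^ q ^ i else 0) = 0}

/-- The exceptional condition `Exc(y)`: `v y ∈ P_v` and `ac y ∈ R_v(v y)`. -/
def Exc (q : ℕ) (v : L → WithTop ℤ) (π : L) (res : L → k)
    (r₀ r : ℕ) (a : ℕ → L) (y : L) : Prop :=
  ((vz v y : ℚ) ∈ Pset q v r₀ r a) ∧ ac v π res y ∈ Rset q v π res r₀ r a ((vz v y : ℚ))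

/-- The sequence `min(0, v(φⁿ x)) / q^(r n)` whose limit is minus the local height of `x`. -/
noncomputable def locSeq (q r : ℕ) (v : L → WithTop ℤ) (φ : L → L) (x : L) (n : ℕ) : ℝ :=
  ((min 0 (vz v (φ^[n] x)) : ℤ) : ℝ) / (q : ℝ) ^ (r * n)

/-!
If `y ≠ 0` is not exceptional, the terms `a i * y ^ q ^ i` of least valuation in `φ y` cannot
cancel: after scaling by `π`, the residue of their sum is `∑_{i ∈ J(v y)} ac(a i) ac(y)^(q^i)`,
which can vanish only if `ac y ∈ R_v(v y)` and at least two indices attain the minimum, and the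
latter puts `v y` in `P_v`. Hence `v(φ y) = min_i (v(a i) + q^i v y)`.

Fix the index `i` with `v x < -v(a i)/(q^i - 1)`. The gap `-v(a i) - (q^i - 1) v y`, positive
at `y = x`, is then multiplied by at least `q^i ≥ q^r₀` at each non-exceptional step, so after
`m` steps it is at least `c ≥ -v(a i)`, which forces `v(φ^m x) ≤ 0`.
-/

section

variable {v : L → WithTop ℤ} {π : L} {res : L → k}

namespace IsDVal

lemma map_one (hv : IsDVal v) : v 1 = 0 := by
  have h := hv.map_mul 1 1
  rw [mul_one] at h
  lift v 1 to ℤ using hv.ne_top 1 one_ne_zero with n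
  norm_cast at h ⊢
  omega

lemma coe_vz (hv : IsDVal v) {y : L} (hy : y ≠ 0) : (vz v y : WithTop ℤ) = v y := by
  lift v y to ℤ using hv.ne_top y hy with n hn
  simp [vz, ← hn]

lemma ne_zero_of_le_coe (hv : IsDVal v) {y : L} {n : ℤ} (h : v y ≤ n) : y ≠ 0 := by
  rintro rfl
  simp [hv.map_zero] at h

lemma vz_le_of_le_coe (hv : IsDVal v) {y : L} {n : ℤ} (h : v y ≤ n) : vz v y ≤ n := by
  rwa [← hv.coe_vz (hv.ne_zero_of_le_coe h), WithTop.coe_le_coe] at h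

lemma vz_mul (hv : IsDVal v) {y z : L} (hy : y ≠ 0) (hz : z ≠ 0) :
    vz v (y * z) = vz v y + vz v z := by
  have h := hv.map_mul y z
  rwa [← hv.coe_vz hy, ← hv.coe_vz hz, ← hv.coe_vz (mul_ne_zero hy hz), ← WithTop.coe_add,
    WithTop.coe_eq_coe] at h

lemma vz_one (hv : IsDVal v) : vz v 1 = 0 := by simp [vz, hv.map_one]

lemma vz_pow (hv : IsDVal v) {y : L} (hy : y ≠ 0) (n : ℕ) : vz v (y ^ n) = n * vz v y := by
  induction n with
  | zero => simpa using hv.vz_one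
  | succ n ih => rw [pow_succ, hv.vz_mul (pow_ne_zero n hy) hy, ih]; push_cast; ring

lemma vz_inv (hv : IsDVal v) {y : L} (hy : y ≠ 0) : vz v y⁻¹ = -vz v y := by
  have h := hv.vz_mul hy (inv_ne_zero hy)
  rw [mul_inv_cancel₀ hy, hv.vz_one] at h
  omega

lemma vz_zpow (hv : IsDVal v) {y : L} (hy : y ≠ 0) (n : ℤ) : vz v (y ^ n) = n * vz v y := by
  cases n with
  | ofNat n => rw [Int.ofNat_eq_natCast, zpow_natCast, hv.vz_pow hy]
  | negSucc n =>
    rw [zpow_negSucc, hv.vz_inv (pow_ne_zero _ hy), hv.vz_pow hy, Int.negSucc_eq]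
    push_cast; ring

lemma nonneg_sum (hv : IsDVal v) {ι : Type*} {s : Finset ι} {f : ι → L}
    (h : ∀ i ∈ s, 0 ≤ v (f i)) : 0 ≤ v (∑ i ∈ s, f i) := by
  induction s using Finset.cons_induction with
  | empty => simp [hv.map_zero]
  | cons j s hj ih =>
    rw [Finset.sum_cons]
    exact (le_min (h j (mem_cons_self j s)) (ih fun i hi => h i (mem_cons_of_mem hi))).trans
      (hv.add_min _ _)

end IsDVal

namespace IsResidue

lemma map_zero (hres : IsResidue v res) (hv : IsDVal v) : res 0 = 0 :=
  (hres.eq_zero_iff 0 (by simp [hv.map_zero])).mpr (by simp [hv.map_zero])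

lemma map_sum (hres : IsResidue v res) (hv : IsDVal v) {ι : Type*} {s : Finset ι} {f : ι → L}
    (h : ∀ i ∈ s, 0 ≤ v (f i)) : res (∑ i ∈ s, f i) = ∑ i ∈ s, res (f i) := by
  induction s using Finset.cons_induction with
  | empty => simpa using hres.map_zero hv
  | cons j s hj ih =>
    have hs : ∀ i ∈ s, 0 ≤ v (f i) := fun i hi => h i (mem_cons_of_mem hi)
    rw [sum_cons, sum_cons, hres.map_add _ _ (h j (mem_cons_self j s)) (hv.nonneg_sum hs), ih hs]

end IsResidue

lemma vz_zpow_of_v_eq_one (hv : IsDVal v) (hπ : v π = 1) (n : ℤ) : vz v (π ^ n) = n := by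
  rw [hv.vz_zpow (hv.ne_zero_of_le_coe hπ.le), show vz v π = 1 by simp [vz, hπ], mul_one]

lemma v_mul_zpow (hv : IsDVal v) (hπ : v π = 1) {z : L} (hz : z ≠ 0) (n : ℤ) :
    v (z * π ^ n) = (vz v z + n : ℤ) := by
  have hπ0 : π ≠ 0 := hv.ne_zero_of_le_coe hπ.le
  rw [← hv.coe_vz (mul_ne_zero hz (zpow_ne_zero n hπ0)), hv.vz_mul hz (zpow_ne_zero n hπ0),
    vz_zpow_of_v_eq_one hv hπ]

lemma v_unit_part (hv : IsDVal v) (hπ : v π = 1) {z : L} (hz : z ≠ 0) :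
    v (z * π ^ (-vz v z)) = 0 := by
  rw [v_mul_zpow hv hπ hz, add_neg_cancel]; rfl

lemma ac_ne_zero (hv : IsDVal v) (hπ : v π = 1) (hres : IsResidue v res) {y : L}
    (hy : y ≠ 0) : ac v π res y ≠ 0 := by
  have h0 := v_unit_part hv hπ hy
  rw [ac, Ne, hres.eq_zero_iff _ h0.ge, h0]
  exact lt_irrefl 0

lemma ac_mul (hv : IsDVal v) (hπ : v π = 1) (hres : IsResidue v res) {y z : L}
    (hy : y ≠ 0) (hz : z ≠ 0) : ac v π res (y * z) = ac v π res y * ac v π res z := by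
  have hπ0 : π ≠ 0 := hv.ne_zero_of_le_coe hπ.le
  have hsplit : y * z * π ^ (-vz v (y * z)) = (y * π ^ (-vz v y)) * (z * π ^ (-vz v z)) := by
    rw [hv.vz_mul hy hz, neg_add, zpow_add₀ hπ0]; ring
  rw [ac, hsplit, hres.map_mul _ _ (v_unit_part hv hπ hy).ge (v_unit_part hv hπ hz).ge]; rfl

lemma ac_pow (hv : IsDVal v) (hπ : v π = 1) (hres : IsResidue v res) {y : L} (hy : y ≠ 0)
    (n : ℕ) : ac v π res (y ^ n) = ac v π res y ^ n := by
  induction n with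
  | zero => simp [ac, hv.vz_one, hres.map_one]
  | succ n ih => rw [pow_succ, ac_mul hv hπ hres (pow_ne_zero n hy) hy, ih, pow_succ]

lemma res_mul_zpow_neg (hv : IsDVal v) (hπ : v π = 1) (hres : IsResidue v res) {z : L}
    (hz : z ≠ 0) {M : ℤ} (hM : M ≤ vz v z) :
    res (z * π ^ (-M)) = if vz v z = M then ac v π res z else 0 := by
  have hπ0 : π ≠ 0 := hv.ne_zero_of_le_coe hπ.le
  set e := vz v z - M with he
  have hsplit : z * π ^ (-M) = (z * π ^ (-vz v z)) * π ^ e := by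
    rw [mul_assoc, ← zpow_add₀ hπ0, he]; congr 2; ring
  have hv_pow : v (π ^ e) = e := by
    rw [← hv.coe_vz (zpow_ne_zero e hπ0), vz_zpow_of_v_eq_one hv hπ]
  have he0 : 0 ≤ v (π ^ e) := hv_pow ▸ WithTop.coe_nonneg.2 (sub_nonneg.2 hM)
  rw [hsplit, hres.map_mul _ _ (v_unit_part hv hπ hz).ge he0]
  change ac v π res z * res (π ^ e) = _
  split_ifs with h
  · rw [show e = 0 by omega, zpow_zero, hres.map_one, mul_one]
  · rw [(hres.eq_zero_iff _ he0).2 (hv_pow ▸ WithTop.coe_pos.2 (by omega)), mul_zero]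

variable {q r₀ r : ℕ} {a : ℕ → L}

lemma exists_mem_Jset (h : ∃ i ∈ Icc r₀ r, a i ≠ 0) (α : ℚ) :
    ∃ i₀, i₀ ∈ Jset q v r₀ r a α := by
  classical
  obtain ⟨i, hi, hai⟩ := h
  obtain ⟨i₀, hi₀, hmin⟩ := ((Icc r₀ r).filter (a · ≠ 0)).exists_min_image
    (fun i => (vz v (a i) : ℚ) + (q : ℚ) ^ i * α) ⟨i, mem_filter.2 ⟨hi, hai⟩⟩
  simp only [mem_filter, mem_Icc] at hi₀ hmin
  exact ⟨i₀, hi₀.1.1, hi₀.1.2, hi₀.2, fun j hj₁ hj₂ haj => hmin j ⟨⟨hj₁, hj₂⟩, haj⟩⟩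

lemma mem_Jset_iff_of_mem_Jset {α : ℚ} {i₀ i : ℕ} (hi₀ : i₀ ∈ Jset q v r₀ r a α) :
    i ∈ Jset q v r₀ r a α ↔ r₀ ≤ i ∧ i ≤ r ∧ a i ≠ 0 ∧
      (vz v (a i) : ℚ) + (q : ℚ) ^ i * α = (vz v (a i₀) : ℚ) + (q : ℚ) ^ i₀ * α := by
  constructor
  · rintro ⟨hi₁, hi₂, hai, hmin⟩
    exact ⟨hi₁, hi₂, hai, (hmin i₀ hi₀.1 hi₀.2.1 hi₀.2.2.1).antisymm (hi₀.2.2.2 i hi₁ hi₂ hai)⟩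
  · rintro ⟨hi₁, hi₂, hai, heq⟩
    exact ⟨hi₁, hi₂, hai, fun j hj₁ hj₂ haj => heq ▸ hi₀.2.2.2 j hj₁ hj₂ haj⟩

lemma mem_Pset_of_mem_Jset (hq : 1 < q) {α : ℚ} {i j : ℕ} (hij : i < j)
    (hi : i ∈ Jset q v r₀ r a α) (hj : j ∈ Jset q v r₀ r a α) : α ∈ Pset q v r₀ r a := by
  obtain ⟨hi₁, -, hai, hi_min⟩ := hi
  obtain ⟨-, hj₂, haj, hj_min⟩ := hj
  have h₁ := hi_min j (hi₁.trans hij.le) hj₂ haj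
  have h₂ := hj_min i hi₁ (hij.le.trans hj₂) hai
  have hpow : (q : ℚ) ^ i < (q : ℚ) ^ j := pow_lt_pow_right₀ (by exact_mod_cast hq) hij
  refine Or.inr ⟨i, j, hi₁, hij, hj₂, hai, haj, ?_⟩
  rw [eq_div_iff (sub_pos.2 hpow).ne']
  linarith

-- `Rset` decides `i ∈ Jset` classically; using the same instance lets its sum appear verbatim.
open scoped Classical in
lemma exc_of_sum_eq_zero (hq : 1 < q) (hv : IsDVal v) (hπ : v π = 1) (hres : IsResidue v res)
    {y : L} (hy : y ≠ 0) {i₀ : ℕ} (hi₀ : i₀ ∈ Jset q v r₀ r a (vz v y))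
    (h : ∑ i ∈ Icc r₀ r, (if i ∈ Jset q v r₀ r a (vz v y)
      then ac v π res (a i) * ac v π res y ^ q ^ i else 0) = 0) :
    Exc q v π res r₀ r a y := by
  refine ⟨?_, Or.inr ⟨ac_ne_zero hv hπ hres hy, h⟩⟩
  by_contra hP
  have hJ : ∀ i ∈ Jset q v r₀ r a (vz v y), i = i₀ := fun i hi => by
    by_contra hne
    rcases lt_or_gt_of_ne hne with hlt | hlt
    exacts [hP (mem_Pset_of_mem_Jset hq hlt hi hi₀), hP (mem_Pset_of_mem_Jset hq hlt hi₀ hi)]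
  rw [sum_eq_single_of_mem i₀ (mem_Icc.2 ⟨hi₀.1, hi₀.2.1⟩)
    (fun i _ hne => if_neg (mt (hJ i) hne)), if_pos hi₀] at h
  exact mul_ne_zero (ac_ne_zero hv hπ hres hi₀.2.2.1) (pow_ne_zero _ (ac_ne_zero hv hπ hres hy)) h

lemma vz_monomial (hv : IsDVal v) {y : L} (hy : y ≠ 0) {i : ℕ} (hai : a i ≠ 0) :
    vz v (a i * y ^ q ^ i) = vz v (a i) + q ^ i * vz v y := by
  rw [hv.vz_mul hai (pow_ne_zero _ hy), hv.vz_pow hy]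
  push_cast; ring

open scoped Classical in
lemma v_nonneg_and_res_monomial_mul_zpow (hv : IsDVal v) (hπ : v π = 1)
    (hres : IsResidue v res) {y : L} (hy : y ≠ 0) {i₀ : ℕ}
    (hi₀ : i₀ ∈ Jset q v r₀ r a (vz v y)) {i : ℕ} (hi : i ∈ Icc r₀ r) :
    let z := a i * y ^ q ^ i * π ^ (-(vz v (a i₀) + q ^ i₀ * vz v y))
    0 ≤ v z ∧ res z = if i ∈ Jset q v r₀ r a (vz v y)
      then ac v π res (a i) * ac v π res y ^ q ^ i else 0 := by
  intro z
  by_cases hai : a i = 0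
  · have hJ : i ∉ Jset q v r₀ r a (vz v y) := fun h => h.2.2.1 hai
    simp [z, hai, hv.map_zero, hres.map_zero hv, hJ]
  have hz : a i * y ^ q ^ i ≠ 0 := mul_ne_zero hai (pow_ne_zero _ hy)
  have hM : vz v (a i₀) + q ^ i₀ * vz v y ≤ vz v (a i * y ^ q ^ i) := by
    rw [vz_monomial hv hy hai]
    exact_mod_cast hi₀.2.2.2 i (mem_Icc.1 hi).1 (mem_Icc.1 hi).2 hai
  refine ⟨?_, ?_⟩
  · rw [v_mul_zpow hv hπ hz]
    exact_mod_cast (by omega : 0 ≤ vz v (a i * y ^ q ^ i) + -(vz v (a i₀) + q ^ i₀ * vz v y))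
  · have hJ : i ∈ Jset q v r₀ r a (vz v y) ↔
        vz v (a i * y ^ q ^ i) = vz v (a i₀) + q ^ i₀ * vz v y := by
      rw [mem_Jset_iff_of_mem_Jset hi₀, vz_monomial hv hy hai]
      simp only [mem_Icc.1 hi, hai, true_and, ne_eq, not_false_eq_true]
      norm_cast
    rw [res_mul_zpow_neg hv hπ hres hz hM, ac_mul hv hπ hres hai (pow_ne_zero _ hy),
      ac_pow hv hπ hres hy]
    by_cases h : i ∈ Jset q v r₀ r a (vz v y)
    · rw [if_pos h, if_pos (hJ.1 h)]
    · rw [if_neg h, if_neg (mt hJ.2 h)]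

open scoped Classical in
theorem v_phiMap_eq_of_not_exc (hq : 1 < q) (hv : IsDVal v) (hπ : v π = 1)
    (hres : IsResidue v res) {y : L} (hy : y ≠ 0) (hexc : ¬Exc q v π res r₀ r a y) {i₀ : ℕ}
    (hi₀ : i₀ ∈ Jset q v r₀ r a (vz v y)) :
    v (phiMap q r₀ r a y) = (vz v (a i₀) + q ^ i₀ * vz v y : ℤ) := by
  set M : ℤ := vz v (a i₀) + q ^ i₀ * vz v y
  have hπ0 : π ≠ 0 := hv.ne_zero_of_le_coe hπ.le
  have hterm := fun i (hi : i ∈ Icc r₀ r) =>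
    v_nonneg_and_res_monomial_mul_zpow hv hπ hres hy hi₀ hi
  set u := phiMap q r₀ r a y * π ^ (-M)
  have hu : u = ∑ i ∈ Icc r₀ r, a i * y ^ q ^ i * π ^ (-M) := by
    simp only [u, phiMap, sum_mul]
  have hu_nonneg : 0 ≤ v u := hu ▸ hv.nonneg_sum fun i hi => (hterm i hi).1
  have hres_ne : res u ≠ 0 := by
    rw [hu, hres.map_sum hv fun i hi => (hterm i hi).1, sum_congr rfl fun i hi => (hterm i hi).2]
    exact fun h => hexc (exc_of_sum_eq_zero hq hv hπ hres hy hi₀ h)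
  have hvu : v u = 0 :=
    le_antisymm (not_lt.1 fun h => hres_ne ((hres.eq_zero_iff u hu_nonneg).2 h)) hu_nonneg
  have hphi : phiMap q r₀ r a y = u * π ^ M := by
    rw [mul_assoc, ← zpow_add₀ hπ0, neg_add_cancel, zpow_zero, mul_one]
  rw [hphi, hv.map_mul, hvu, zero_add, ← hv.coe_vz (zpow_ne_zero _ hπ0),
    vz_zpow_of_v_eq_one hv hπ]

theorem v_phiMap_le_of_not_exc (hq : 1 < q) (hv : IsDVal v) (hπ : v π = 1)
    (hres : IsResidue v res) {y : L} (hy : y ≠ 0) (hexc : ¬Exc q v π res r₀ r a y) {i : ℕ}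
    (hi : i ∈ Icc r₀ r) (hai : a i ≠ 0) :
    v (phiMap q r₀ r a y) ≤ (vz v (a i) + q ^ i * vz v y : ℤ) := by
  obtain ⟨i₀, hi₀⟩ := exists_mem_Jset (q := q) (v := v) ⟨i, hi, hai⟩ (vz v y)
  rw [v_phiMap_eq_of_not_exc hq hv hπ hres hy hexc hi₀, WithTop.coe_le_coe]
  exact_mod_cast hi₀.2.2.2 i (mem_Icc.1 hi).1 (mem_Icc.1 hi).2 hai

lemma one_le_neg_sub_mul_of_lt_div {A Q w : ℤ} (hQ : 1 < Q) (h : (w : ℚ) < -A / (Q - 1)) :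
    1 ≤ -A - (Q - 1) * w := by
  have h' : (w : ℚ) * (Q - 1) < -A := (lt_div_iff₀ (by exact_mod_cast sub_pos.2 hQ)).1 h
  have h'' : w * (Q - 1) < -A := by exact_mod_cast h'
  linarith

/-- `(q^i - 1) (N - v y)` with `N = -v(a i) / (q^i - 1)`, cleared of denominators. -/
noncomputable def valGap (q : ℕ) (v : L → WithTop ℤ) (a : ℕ → L) (i : ℕ) (y : L) : ℤ :=
  -vz v (a i) - (q ^ i - 1) * vz v y

theorem mul_valGap_le_valGap_phiMap (hq : 1 < q) (hv : IsDVal v) (hπ : v π = 1)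
    (hres : IsResidue v res) {y : L} (hy : y ≠ 0) (hexc : ¬Exc q v π res r₀ r a y) {i : ℕ}
    (hi : i ∈ Icc r₀ r) (hai : a i ≠ 0) :
    phiMap q r₀ r a y ≠ 0 ∧ q ^ i * valGap q v a i y ≤ valGap q v a i (phiMap q r₀ r a y) := by
  have hle := v_phiMap_le_of_not_exc hq hv hπ hres hy hexc hi hai
  refine ⟨hv.ne_zero_of_le_coe hle, ?_⟩
  have hvz := hv.vz_le_of_le_coe hle
  have hQ : (1 : ℤ) ≤ q ^ i := one_le_pow₀ (by exact_mod_cast hq.le)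
  unfold valGap
  nlinarith

theorem pow_le_valGap_iterate (hq : 1 < q) (hv : IsDVal v) (hπ : v π = 1)
    (hres : IsResidue v res) {i : ℕ} (hi : i ∈ Icc r₀ r) (hai : a i ≠ 0) {x : L} (hx : x ≠ 0)
    (hgap : 1 ≤ valGap q v a i x) (n : ℕ)
    (hE : ∀ j < n, (phiMap q r₀ r a)^[j] x ≠ 0 → ¬Exc q v π res r₀ r a ((phiMap q r₀ r a)^[j] x)) :
    (phiMap q r₀ r a)^[n] x ≠ 0 ∧ ((q : ℤ) ^ i) ^ n ≤ valGap q v a i ((phiMap q r₀ r a)^[n] x) := by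
  induction n with
  | zero => exact ⟨hx, by simpa using hgap⟩
  | succ n ih =>
    obtain ⟨hne, hgap_n⟩ := ih fun j hj => hE j (hj.trans n.lt_succ_self)
    obtain ⟨hne', hstep⟩ :=
      mul_valGap_le_valGap_phiMap hq hv hπ hres hne (hE n n.lt_succ_self hne) hi hai
    rw [Function.iterate_succ_apply', pow_succ']
    exact ⟨hne', (mul_le_mul_of_nonneg_left hgap_n (by positivity)).trans hstep⟩

end

theorem statement11_general
    (p q : ℕ) (hp : p.Prime) (hq : ∃ s : ℕ, 0 < s ∧ q = p ^ s)
    (v : L → WithTop ℤ) (hv : IsDVal v)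
    (π : L) (hπ : v π = 1) (res : L → k) (hres : IsResidue v res)
    (r₀ r : ℕ) (hr₀1 : 1 ≤ r₀)
    (a : ℕ → L)
    (c : ℕ)
    (hbound : ∀ i ∈ Finset.Icc r₀ r, a i ≠ 0 → -(vz v (a i)) ≤ (c : ℤ))
    (m : ℕ) (hm : IsLeast {m' : ℕ | c ≤ q ^ (r₀ * m')} m)
    (x : L) (hx : x ≠ 0)
    (hN : ∃ i ∈ Finset.Icc r₀ r, a i ≠ 0 ∧
      (vz v x : ℚ) < -(vz v (a i) : ℚ) / ((q : ℚ) ^ i - 1)) :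
    (∃ n : ℕ, n < m ∧ (phiMap q r₀ r a)^[n] x ≠ 0 ∧
      Exc q v π res r₀ r a ((phiMap q r₀ r a)^[n] x)) ∨
    v ((phiMap q r₀ r a)^[m] x) ≤ 0 := by
  have hq1 : 1 < q := by
    obtain ⟨s, hs, rfl⟩ := hq
    exact Nat.one_lt_pow hs.ne' hp.one_lt
  by_cases hE : ∃ n : ℕ, n < m ∧ (phiMap q r₀ r a)^[n] x ≠ 0 ∧
      Exc q v π res r₀ r a ((phiMap q r₀ r a)^[n] x)
  · exact Or.inl hE
  push Not at hE
  right
  obtain ⟨i, hi, hai, hxi⟩ := hN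
  have hQ : 1 < (q : ℤ) ^ i :=
    one_lt_pow₀ (by exact_mod_cast hq1) (by have := (mem_Icc.1 hi).1; omega)
  obtain ⟨hne, hgap⟩ := pow_le_valGap_iterate hq1 hv hπ hres hi hai hx
    (one_le_neg_sub_mul_of_lt_div hQ (by push_cast; exact hxi)) m hE
  have hc : (c : ℤ) ≤ ((q : ℤ) ^ i) ^ m := calc
    (c : ℤ) ≤ (q : ℤ) ^ (r₀ * m) := by exact_mod_cast hm.1
    _ ≤ ((q : ℤ) ^ i) ^ m := by
      rw [← pow_mul]
      exact pow_le_pow_right₀ (by exact_mod_cast hq1.le) (Nat.mul_le_mul_right m (mem_Icc.1 hi).1)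
  have hvm : vz v ((phiMap q r₀ r a)^[m] x) ≤ 0 := by
    unfold valGap at hgap
    nlinarith [hbound i hi hai]
  rw [← hv.coe_vz hne]
  exact_mod_cast hvm

/-- The descent dichotomy underlying Lemma 2.14: if `r₀ ≥ 1`, `v ∈ S`, `-v(a i) ≤ c` for all
`i` with `a i ≠ 0`, `m` is the least integer with `q^(r₀ m) ≥ c`, and `v(x) < N_v`, then
either some iterate `φⁿ(x)` with `n ≤ m - 1` is nonzero and exceptional, or
`v(φᵐ(x)) ≤ 0`. -/
theorem statement11
    (p q : ℕ) (hp : p.Prime) (hq : ∃ s : ℕ, 0 < s ∧ q = p ^ s)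
    [CharP L p] (F : Subfield L) (hF : Nat.card F = q)
    (v : L → WithTop ℤ) (hv : IsDVal v)
    (π : L) (hπ : v π = 1) (res : L → k) (hres : IsResidue v res)
    (r₀ r : ℕ) (hr1 : 1 ≤ r) (hr₀r : r₀ ≤ r) (hr₀1 : 1 ≤ r₀)
    (a : ℕ → L) (har₀ : a r₀ ≠ 0) (har : a r = 1)
    (hS : ∃ i ∈ Finset.Icc r₀ (r - 1), v (a i) < 0)
    (c : ℕ) (hc : 1 ≤ c)
    (hbound : ∀ i ∈ Finset.Icc r₀ r, a i ≠ 0 → -(vz v (a i)) ≤ (c : ℤ))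
    (m : ℕ) (hm : IsLeast {m' : ℕ | c ≤ q ^ (r₀ * m')} m)
    (x : L) (hx : x ≠ 0)
    (hN : ∃ i ∈ Finset.Icc r₀ r, a i ≠ 0 ∧
      (vz v x : ℚ) < -(vz v (a i) : ℚ) / ((q : ℚ) ^ i - 1)) :
    (∃ n : ℕ, n < m ∧ (phiMap q r₀ r a)^[n] x ≠ 0 ∧
      Exc q v π res r₀ r a ((phiMap q r₀ r a)^[n] x)) ∨
    v ((phiMap q r₀ r a)^[m] x) ≤ 0 :=
  statement11_general p q hp hq v hv π hπ res hres r₀ r hr₀1 a c hbound m hm x hx hN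

end Drinfeld
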